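/- Equivalence of unbalanced relaxations: for ρ_0, ρ_1 ∈ H_+ and α > 0, V_1(ρ_0,ρ_1) = inf{ ‖u‖_* + α‖v‖_* : ρ_0 − ρ_1 = ∇_L*(u) + v } equals V̂_1(ρ_0,ρ_1) = inf{ ‖u‖_* + α‖ρ_0 − μ‖_* + α‖ρ_1 − ν‖_* : μ, ν ∈ H_+, tr(μ) = tr(ν), μ − ν = ∇_L*(u) }. -/

import Mathlib

/-!
The two infima are over sets of costs that dominate each other. A competitor `(u, v)` for `V1`
yields the competitor `μ = ρ₀ + v⁻`, `ν = ρ₁ + v⁺` for `hatV1` of the same cost, because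
`‖v‖_* = ‖v⁺‖_* + ‖v⁻‖_*`, and the traces of `μ` and `ν` agree because `∇_L*(u)` is traceless.
Conversely, a competitor `(u, μ, ν)` for `hatV1` yields the competitor
`v = (ρ₀ - μ) - (ρ₁ - ν)` for `V1` of no larger cost, by the triangle inequality for the nuclear
norm of Hermitian matrices. That inequality holds because `‖A‖_* = tr (W A)` for `W = sign A`,
and `-1 ≤ W ≤ 1` gives `tr (W P) ≤ tr P` for `P ⪰ 0`.
-/

open Matrix
open scoped ComplexOrder

noncomputable def nuclearNorm {m k : Type*} [Fintype m] [Fintype k] [DecidableEq k]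
    (A : Matrix m k ℂ) : ℝ :=
  ∑ i, Real.sqrt ((Matrix.isHermitian_conjTranspose_mul_self A).eigenvalues i)

noncomputable def opNorm {m k : Type*} [Fintype m] [Fintype k] [DecidableEq k]
    (A : Matrix m k ℂ) : ℝ :=
  ‖LinearMap.toContinuousLinearMap (Matrix.toEuclideanLin A)‖

noncomputable def stack {N m : ℕ} (u : Fin N → Matrix (Fin m) (Fin m) ℂ) :
    Matrix (Fin N × Fin m) (Fin m) ℂ :=
  Matrix.of fun p j => u p.1 p.2 j

noncomputable def grad {N n : ℕ} (L : Fin N → Matrix (Fin n) (Fin n) ℂ)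
    (X : Matrix (Fin n) (Fin n) ℂ) : Fin N → Matrix (Fin n) (Fin n) ℂ :=
  fun k => L k * X - X * L k

noncomputable def divg {N n : ℕ} (L Y : Fin N → Matrix (Fin n) (Fin n) ℂ) :
    Matrix (Fin n) (Fin n) ℂ :=
  ∑ k, (L k * Y k - Y k * L k)

noncomputable def V1 {N n : ℕ} (L : Fin N → Matrix (Fin n) (Fin n) ℂ) (α : ℝ)
    (ρ₀ ρ₁ : Matrix (Fin n) (Fin n) ℂ) : ℝ :=
  sInf {x : ℝ | ∃ (u : Fin N → Matrix (Fin n) (Fin n) ℂ) (v : Matrix (Fin n) (Fin n) ℂ),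
    (∀ k, (u k)ᴴ = -(u k)) ∧ v.IsHermitian ∧ ρ₀ - ρ₁ = divg L u + v ∧
    x = nuclearNorm (stack u) + α * nuclearNorm v}

noncomputable def hatV1 {N n : ℕ} (L : Fin N → Matrix (Fin n) (Fin n) ℂ) (α : ℝ)
    (ρ₀ ρ₁ : Matrix (Fin n) (Fin n) ℂ) : ℝ :=
  sInf {x : ℝ | ∃ (u : Fin N → Matrix (Fin n) (Fin n) ℂ)
      (μ ν : Matrix (Fin n) (Fin n) ℂ),
    (∀ k, (u k)ᴴ = -(u k)) ∧ μ.PosSemidef ∧ ν.PosSemidef ∧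
    Matrix.trace μ = Matrix.trace ν ∧ μ - ν = divg L u ∧
    x = nuclearNorm (stack u) + α * nuclearNorm (ρ₀ - μ) + α * nuclearNorm (ρ₁ - ν)}


open scoped MatrixOrder

section NuclearNorm

variable {n : Type*} [Fintype n] [DecidableEq n]

lemma Matrix.IsHermitian.trace_cfc {𝕜 : Type*} [RCLike 𝕜] {A : Matrix n n 𝕜} (hA : A.IsHermitian)
    (f : ℝ → ℝ) : trace (cfc f A) = ∑ i, (f (hA.eigenvalues i) : 𝕜) := by
  rw [hA.cfc_eq, IsHermitian.cfc, Unitary.conjStarAlgAut_apply, trace_mul_cycle,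
    Unitary.coe_star_mul_self, one_mul, trace_diagonal]
  rfl

lemma Matrix.trace_mul_nonneg {𝕜 : Type*} [RCLike 𝕜] {A B : Matrix n n 𝕜} (hA : 0 ≤ A)
    (hB : 0 ≤ B) : 0 ≤ trace (A * B) := by
  have hconj : trace (A * B) = trace (CFC.sqrt A * B * CFC.sqrt A) := by
    rw [trace_mul_cycle, CFC.sqrt_mul_sqrt_self A]
  rw [hconj]
  exact ((CFC.sqrt_nonneg A).isSelfAdjoint.conjugate_nonneg hB).posSemidef.trace_nonneg

lemma Matrix.exists_mul_eq_abs {𝕜 : Type*} [RCLike 𝕜] {A : Matrix n n 𝕜} (hA : IsSelfAdjoint A) :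
    ∃ W : Matrix n n 𝕜, 0 ≤ 1 - W ∧ 0 ≤ 1 + W ∧ W * A = CFC.abs A := by
  let s : ℝ → ℝ := fun x => if 0 ≤ x then 1 else -1
  -- `s` is discontinuous, but every function is continuous on the finite spectrum of a matrix
  have hs : ContinuousOn s (spectrum ℝ A) := A.finite_real_spectrum.continuousOn s
  refine ⟨cfc s A, ?_, ?_, ?_⟩
  · rw [← cfc_const_one ℝ A, ← cfc_sub (fun _ => 1) s A]
    exact cfc_nonneg fun x _ => by simp only [s]; split_ifs <;> norm_num
  · rw [← cfc_const_one ℝ A, ← cfc_add (a := A) (fun _ => 1) s]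
    exact cfc_nonneg fun x _ => by simp only [s]; split_ifs <;> norm_num
  · conv_lhs => arg 2; rw [← cfc_id' ℝ A]
    rw [← cfc_mul s (fun x => x) A, CFC.abs_eq_cfc_norm A]
    refine cfc_congr fun x _ => ?_
    simp only [s, Real.norm_eq_abs]
    split_ifs with h
    · rw [one_mul, abs_of_nonneg h]
    · rw [neg_one_mul, abs_of_neg (not_le.mp h)]

lemma ofReal_nuclearNorm (A : Matrix n n ℂ) : (nuclearNorm A : ℂ) = trace (CFC.abs A) := by
  rw [CFC.abs, CFC.sqrt_eq_real_sqrt _ (star_mul_self_nonneg A), cfcₙ_eq_cfc,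
    star_eq_conjTranspose, (isHermitian_conjTranspose_mul_self A).trace_cfc, nuclearNorm]
  push_cast
  rfl

lemma nuclearNorm_neg (A : Matrix n n ℂ) : nuclearNorm (-A) = nuclearNorm A := by
  apply Complex.ofReal_injective
  rw [ofReal_nuclearNorm, ofReal_nuclearNorm, CFC.abs_neg]

lemma ofReal_nuclearNorm_of_nonneg {A : Matrix n n ℂ} (hA : 0 ≤ A) :
    (nuclearNorm A : ℂ) = trace A := by
  rw [ofReal_nuclearNorm, CFC.abs_of_nonneg A]

lemma nuclearNorm_add_of_nonneg {A B : Matrix n n ℂ} (hA : 0 ≤ A) (hB : 0 ≤ B) :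
    nuclearNorm (A + B) = nuclearNorm A + nuclearNorm B := by
  apply Complex.ofReal_injective
  push_cast
  rw [ofReal_nuclearNorm_of_nonneg (add_nonneg hA hB), ofReal_nuclearNorm_of_nonneg hA,
    ofReal_nuclearNorm_of_nonneg hB, trace_add]

lemma nuclearNorm_eq_posPart_add_negPart {A : Matrix n n ℂ} (hA : IsSelfAdjoint A) :
    nuclearNorm A = nuclearNorm A⁺ + nuclearNorm A⁻ := by
  rw [← nuclearNorm_add_of_nonneg (CFC.posPart_nonneg A) (CFC.negPart_nonneg A)]
  apply Complex.ofReal_injective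
  rw [ofReal_nuclearNorm, CFC.posPart_add_negPart A,
    ofReal_nuclearNorm_of_nonneg (CFC.abs_nonneg A)]

lemma nuclearNorm_sub_le_of_nonneg {P Q : Matrix n n ℂ} (hP : 0 ≤ P) (hQ : 0 ≤ Q) :
    nuclearNorm (P - Q) ≤ nuclearNorm P + nuclearNorm Q := by
  obtain ⟨W, hW₁, hW₂, hWA⟩ := exists_mul_eq_abs (hP.isSelfAdjoint.sub hQ.isSelfAdjoint)
  have hWP : trace (W * P) ≤ trace P := by
    simpa [sub_mul, trace_sub, sub_nonneg] using trace_mul_nonneg hW₁ hP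
  have hWQ : -trace (W * Q) ≤ trace Q := by
    simpa [add_mul, trace_add, neg_le_iff_add_nonneg, add_comm] using trace_mul_nonneg hW₂ hQ
  suffices (nuclearNorm (P - Q) : ℂ) ≤ nuclearNorm P + nuclearNorm Q by exact_mod_cast this
  calc (nuclearNorm (P - Q) : ℂ) = trace (W * P) + -trace (W * Q) := by
        rw [ofReal_nuclearNorm, ← hWA, mul_sub, trace_sub, sub_eq_add_neg]
    _ ≤ trace P + trace Q := add_le_add hWP hWQ
    _ = nuclearNorm P + nuclearNorm Q := by
        rw [ofReal_nuclearNorm_of_nonneg hP, ofReal_nuclearNorm_of_nonneg hQ]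

lemma nuclearNorm_sub_le {A B : Matrix n n ℂ} (hA : IsSelfAdjoint A) (hB : IsSelfAdjoint B) :
    nuclearNorm (A - B) ≤ nuclearNorm A + nuclearNorm B := by
  have hAp := CFC.posPart_nonneg A
  have hAn := CFC.negPart_nonneg A
  have hBp := CFC.posPart_nonneg B
  have hBn := CFC.negPart_nonneg B
  have hsplit : A - B = (A⁺ + B⁻) - (A⁻ + B⁺) := by
    nth_rewrite 1 [← CFC.posPart_sub_negPart A, ← CFC.posPart_sub_negPart B]
    abel
  calc nuclearNorm (A - B) ≤ nuclearNorm (A⁺ + B⁻) + nuclearNorm (A⁻ + B⁺) := by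
        rw [hsplit]
        exact nuclearNorm_sub_le_of_nonneg (add_nonneg hAp hBn) (add_nonneg hAn hBp)
    _ = nuclearNorm A + nuclearNorm B := by
        rw [nuclearNorm_add_of_nonneg hAp hBn, nuclearNorm_add_of_nonneg hAn hBp,
          nuclearNorm_eq_posPart_add_negPart hA, nuclearNorm_eq_posPart_add_negPart hB]
        ring

end NuclearNorm

lemma trace_divg {N n : ℕ} (L u : Fin N → Matrix (Fin n) (Fin n) ℂ) :
    trace (divg L u) = 0 := by
  simp only [divg, trace_sum, trace_sub, trace_mul_comm (L _), sub_self, Finset.sum_const_zero]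

theorem V1_eq_hatV1_general {N n : ℕ}
    (L : Fin N → Matrix (Fin n) (Fin n) ℂ)
    (α : ℝ) (hα : 0 < α)
    (ρ₀ ρ₁ : Matrix (Fin n) (Fin n) ℂ)
    (h₀ : ρ₀.PosSemidef) (h₁ : ρ₁.PosSemidef) :
    V1 L α ρ₀ ρ₁ = hatV1 L α ρ₀ ρ₁ := by
  refine csInf_eq_csInf_of_forall_exists_le ?_ ?_
  · rintro _ ⟨u, v, hu, hv, hρ, rfl⟩
    have hμν : (ρ₀ + v⁻) - (ρ₁ + v⁺) = divg L u :=
      calc _ = (ρ₀ - ρ₁) - (v⁺ - v⁻) := by abel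
        _ = divg L u := by
          rw [CFC.posPart_sub_negPart v hv.isSelfAdjoint, hρ, add_sub_cancel_right]
    have htr : trace (ρ₀ + v⁻) = trace (ρ₁ + v⁺) := by
      rw [← sub_eq_zero, ← trace_sub, hμν, trace_divg]
    have hμ := add_nonneg h₀.nonneg (CFC.negPart_nonneg v)
    have hν := add_nonneg h₁.nonneg (CFC.posPart_nonneg v)
    refine ⟨_, ⟨u, _, _, hu, hμ.posSemidef, hν.posSemidef, htr, hμν, rfl⟩, le_of_eq ?_⟩
    rw [sub_add_cancel_left, sub_add_cancel_left, nuclearNorm_neg, nuclearNorm_neg,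
      nuclearNorm_eq_posPart_add_negPart hv.isSelfAdjoint]
    ring
  · rintro _ ⟨u, μ, ν, hu, hμ, hν, -, hμν, rfl⟩
    have h₀' := h₀.isHermitian.sub hμ.isHermitian
    have h₁' := h₁.isHermitian.sub hν.isHermitian
    refine ⟨_, ⟨u, (ρ₀ - μ) - (ρ₁ - ν), hu, h₀'.sub h₁', by rw [← hμν]; abel, rfl⟩, ?_⟩
    have htri := nuclearNorm_sub_le h₀'.isSelfAdjoint h₁'.isSelfAdjoint
    linarith [mul_le_mul_of_nonneg_left htri hα.le]

theorem V1_eq_hatV1 {N n : ℕ}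
    (L : Fin N → Matrix (Fin n) (Fin n) ℂ) (hL : ∀ k, (L k).IsHermitian)
    (α : ℝ) (hα : 0 < α)
    (ρ₀ ρ₁ : Matrix (Fin n) (Fin n) ℂ)
    (h₀ : ρ₀.PosSemidef) (h₁ : ρ₁.PosSemidef) :
    V1 L α ρ₀ ρ₁ = hatV1 L α ρ₀ ρ₁ :=
  V1_eq_hatV1_general L α hα ρ₀ ρ₁ h₀ h₁
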